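/- arXiv:2310.18733 — 4 statements merged into one kernel-verified Lean document; each statement's English description precedes it below -/
import Mathlib

section
/- Under the threshold regression model (Y = r(X) + ε, X ⊥ ε, E ε = 0, E ε² = σ² < ∞, E X² < ∞, E r(X)² < ∞, X with continuous cdf), let u₀ be the infimum of all u in the support of X with P(r(X) = α + βX | X > u) = 1 for some α,β, and assume u₀ is finite and that r is not almost surely linear on the whole support (i.e., for all α,β, P(r(X) = α + βX) < 1). Then for every u < u₀ with P(X ≥ u) > 0 and Var(X | X ≥ u) > 0, the loss ℓ(u) = min_{α,β} E[(Y - α - βX)² | X ≥ u] satisfies ℓ(u) > σ². -/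
open MeasureTheory ProbabilityTheory

/-!
Conditionally on `{X ≥ u}`, the regressor `X` stays independent of the centred noise `ε`, so the
conditional loss of a line `α + β X` is `E[(r(X) - α - β X)² | X ≥ u] + σ²`. As
`Var(X | X ≥ u) > 0`, the first term is minimised by the least-squares line, and its minimum
vanishes only if `r(X)` is a.s. affine on `{X ≥ u}`, hence on `{X > u}` (`X` has no atoms). That
would put `u` in the set `U` with infimum `u₀ > u`. Finally `U` is bounded below: two lines that
agree with `r(X)` on a common non-null tail coincide because `X` has no atoms, so an unbounded `U`
would make `r(X)` a.s. affine everywhere.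
-/

/-- Conditional mean of `W` given the event `{X ≥ u}`. -/
noncomputable def condMean {Ω : Type*} [MeasurableSpace Ω] (μ : Measure Ω)
    (X : Ω → ℝ) (u : ℝ) (W : Ω → ℝ) : ℝ :=
  (∫ ω in {ω | u ≤ X ω}, W ω ∂μ) / (μ {ω | u ≤ X ω}).toReal

/-- `ℓ(u)`: the minimal conditional mean squared error of a linear predictor of
`Y` from `X` given `X ≥ u`. -/
noncomputable def linLoss {Ω : Type*} [MeasurableSpace Ω] (μ : Measure Ω)
    (X Y : Ω → ℝ) (u : ℝ) : ℝ :=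
  sInf {v : ℝ | ∃ α β : ℝ, v = condMean μ X u (fun ω => (Y ω - α - β * X ω) ^ 2)}

section LeastSquares

variable {Ω : Type*} [MeasurableSpace Ω] {ν : Measure Ω} [IsProbabilityMeasure ν] {g x : Ω → ℝ}

lemma memLp_sub_affine (hg : MemLp g 2 ν) (hx : MemLp x 2 ν) (a b : ℝ) :
    MemLp (fun ω => g ω - a - b * x ω) 2 ν :=
  (hg.sub (memLp_const a)).sub (hx.const_mul b)

lemma integral_sub_affine (hg : MemLp g 2 ν) (hx : MemLp x 2 ν) (a b : ℝ) :
    ∫ ω, (g ω - a - b * x ω) ∂ν = ∫ ω, g ω ∂ν - a - b * ∫ ω, x ω ∂ν := by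
  have hg1 := hg.integrable one_le_two
  have hx1 := hx.integrable one_le_two
  rw [integral_sub (by fun_prop) (by fun_prop), integral_sub hg1 (integrable_const a),
    integral_const_mul, integral_const, probReal_univ, one_smul]

lemma integral_sub_affine_mul (hg : MemLp g 2 ν) (hx : MemLp x 2 ν) (a b : ℝ) :
    ∫ ω, (g ω - a - b * x ω) * x ω ∂ν =
      ∫ ω, g ω * x ω ∂ν - a * ∫ ω, x ω ∂ν - b * ∫ ω, x ω ^ 2 ∂ν := by
  have hgx : Integrable (fun ω => g ω * x ω) ν := hg.integrable_mul hx
  have hx1 := hx.integrable one_le_two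
  have hx2 := hx.integrable_sq
  calc ∫ ω, (g ω - a - b * x ω) * x ω ∂ν
      = ∫ ω, (g ω * x ω - a * x ω - b * x ω ^ 2) ∂ν := by congr 1; ext ω; ring
    _ = _ := by
        rw [integral_sub (by fun_prop) (by fun_prop), integral_sub hgx (by fun_prop),
          integral_const_mul, integral_const_mul]

lemma exists_integral_sub_affine_eq_zero (hg : MemLp g 2 ν) (hx : MemLp x 2 ν)
    (hvar : 0 < ∫ ω, x ω ^ 2 ∂ν - (∫ ω, x ω ∂ν) ^ 2) :
    ∃ a b : ℝ, ∫ ω, (g ω - a - b * x ω) ∂ν = 0 ∧ ∫ ω, (g ω - a - b * x ω) * x ω ∂ν = 0 := by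
  set b := (∫ ω, g ω * x ω ∂ν - (∫ ω, g ω ∂ν) * ∫ ω, x ω ∂ν) /
    (∫ ω, x ω ^ 2 ∂ν - (∫ ω, x ω ∂ν) ^ 2)
  refine ⟨∫ ω, g ω ∂ν - b * ∫ ω, x ω ∂ν, b, ?_, ?_⟩
  · rw [integral_sub_affine hg hx]; ring
  · have hb : b * (∫ ω, x ω ^ 2 ∂ν - (∫ ω, x ω ∂ν) ^ 2) =
        ∫ ω, g ω * x ω ∂ν - (∫ ω, g ω ∂ν) * ∫ ω, x ω ∂ν := div_mul_cancel₀ _ hvar.ne'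
    rw [integral_sub_affine_mul hg hx]
    linear_combination -hb

lemma integral_sq_sub_affine_eq (hg : MemLp g 2 ν) (hx : MemLp x 2 ν) {a b : ℝ}
    (h₁ : ∫ ω, (g ω - a - b * x ω) ∂ν = 0) (h₂ : ∫ ω, (g ω - a - b * x ω) * x ω ∂ν = 0)
    (α β : ℝ) :
    ∫ ω, (g ω - α - β * x ω) ^ 2 ∂ν =
      ∫ ω, (g ω - a - b * x ω) ^ 2 ∂ν + ∫ ω, (a - α + (b - β) * x ω) ^ 2 ∂ν := by
  have he := memLp_sub_affine hg hx a b
  have hℓ : MemLp (fun ω => a - α + (b - β) * x ω) 2 ν :=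
    (memLp_const (a - α)).add (hx.const_mul (b - β))
  have he1 : Integrable (fun ω => g ω - a - b * x ω) ν := he.integrable one_le_two
  have hex : Integrable (fun ω => (g ω - a - b * x ω) * x ω) ν := he.integrable_mul hx
  have he2 := he.integrable_sq
  have hℓ2 := hℓ.integrable_sq
  calc ∫ ω, (g ω - α - β * x ω) ^ 2 ∂ν
      = ∫ ω, ((g ω - a - b * x ω) ^ 2 + (a - α + (b - β) * x ω) ^ 2 +
          (2 * (a - α) * (g ω - a - b * x ω) + 2 * (b - β) * ((g ω - a - b * x ω) * x ω))) ∂ν := by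
        congr 1; ext ω; ring
    _ = _ := by
        rw [integral_add (by fun_prop) (by fun_prop), integral_add he2 hℓ2,
          integral_add (by fun_prop) (by fun_prop),
          integral_const_mul, integral_const_mul, h₁, h₂]
        ring

lemma exists_pos_le_integral_sq_sub_affine (hg : MemLp g 2 ν) (hx : MemLp x 2 ν)
    (hvar : 0 < ∫ ω, x ω ^ 2 ∂ν - (∫ ω, x ω ∂ν) ^ 2)
    (hnot : ∀ a b : ℝ, ¬ ∀ᵐ ω ∂ν, g ω = a + b * x ω) :
    ∃ C > 0, ∀ α β : ℝ, C ≤ ∫ ω, (g ω - α - β * x ω) ^ 2 ∂ν := by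
  obtain ⟨a, b, h₁, h₂⟩ := exists_integral_sub_affine_eq_zero hg hx hvar
  refine ⟨∫ ω, (g ω - a - b * x ω) ^ 2 ∂ν, ?_, fun α β => ?_⟩
  · refine (integral_nonneg fun ω => sq_nonneg _).lt_of_ne' fun h0 => hnot a b ?_
    filter_upwards [(integral_eq_zero_iff_of_nonneg (fun ω => sq_nonneg _)
      (memLp_sub_affine hg hx a b).integrable_sq).mp h0] with ω hω
    have : g ω - a - b * x ω = 0 := pow_eq_zero_iff two_ne_zero |>.mp hω
    linarith
  · rw [integral_sq_sub_affine_eq hg hx h₁ h₂ α β]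
    exact le_add_of_nonneg_right (integral_nonneg fun ω => sq_nonneg _)

end LeastSquares

section Conditioning

variable {Ω : Type*} [MeasurableSpace Ω] {μ : Measure Ω}

lemma condMean_eq_integral_cond (X : Ω → ℝ) (u : ℝ) (W : Ω → ℝ) :
    condMean μ X u W = ∫ ω, W ω ∂μ[|{ω | u ≤ X ω}] := by
  rw [condMean, ProbabilityTheory.cond, integral_smul_measure, ENNReal.toReal_inv, smul_eq_mul,
    div_eq_inv_mul]

lemma le_linLoss {X Y : Ω → ℝ} {u c : ℝ}
    (h : ∀ α β : ℝ, c ≤ condMean μ X u (fun ω => (Y ω - α - β * X ω) ^ 2)) :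
    c ≤ linLoss μ X Y u :=
  le_csInf ⟨_, 0, 0, rfl⟩ fun _ ⟨α, β, hv⟩ => hv ▸ h α β

lemma ae_cond_iff [IsFiniteMeasure μ] {s : Set Ω} (hs : MeasurableSet s) {p : Ω → Prop} :
    (∀ᵐ ω ∂μ[|s], p ω) ↔ ∀ᵐ ω ∂μ, ω ∈ s → p ω := by
  rw [ProbabilityTheory.cond,
    Measure.ae_ennreal_smul_measure_iff (ENNReal.inv_ne_zero.2 (measure_ne_top μ s)),
    ae_restrict_iff' hs]

lemma cond_eq_one_iff_ae [IsFiniteMeasure μ] {s t : Set Ω} (hs : MeasurableSet s)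
    (ht : MeasurableSet t) (hs0 : μ s ≠ 0) :
    μ[t|s] = 1 ↔ ∀ᵐ ω ∂μ, ω ∈ s → ω ∈ t := by
  have := cond_isProbabilityMeasure (μ := μ) hs0
  rw [← ae_cond_iff hs, ae_mem_iff_measure_eq ht.nullMeasurableSet, measure_univ]

lemma cond_eq_one_of_ae_cond_of_subset [IsFiniteMeasure μ] {s s' t : Set Ω}
    (hs : MeasurableSet s) (hs' : MeasurableSet s') (ht : MeasurableSet t) (hss' : s ⊆ s')
    (hs0 : μ s ≠ 0) (h : ∀ᵐ ω ∂μ[|s'], ω ∈ t) : μ[t|s] = 1 := by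
  refine (cond_eq_one_iff_ae hs ht hs0).2 ?_
  filter_upwards [(ae_cond_iff hs').1 h] with ω h hω using h (hss' hω)

lemma MeasureTheory.MemLp.cond {E : Type*} [NormedAddCommGroup E] {p : ENNReal} {f : Ω → E}
    {s : Set Ω} (hf : MemLp f p μ) (hs0 : μ s ≠ 0) : MemLp f p μ[|s] :=
  (hf.restrict s).smul_measure (ENNReal.inv_ne_top.2 hs0)

lemma measure_lt_eq_measure_le {X : Ω → ℝ} {u : ℝ} (hu : μ {ω | X ω = u} = 0) :
    μ {ω | u < X ω} = μ {ω | u ≤ X ω} := by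
  refine le_antisymm (measure_mono fun ω (h : u < X ω) => h.le) ?_
  calc μ {ω | u ≤ X ω} ≤ μ ({ω | u < X ω} ∪ {ω | X ω = u}) :=
        measure_mono fun ω (hω : u ≤ X ω) => hω.lt_or_eq.imp id Eq.symm
    _ ≤ μ {ω | u < X ω} := (measure_union_le _ _).trans (by rw [hu, add_zero])

end Conditioning

section Independence

variable {Ω : Type*} [MeasurableSpace Ω] {μ : Measure Ω}

lemma ProbabilityTheory.IndepFun.integral_cond_comp_mul {β γ : Type*} [MeasurableSpace β]
    [MeasurableSpace γ] {X : Ω → β} {ε : Ω → γ} (hindep : IndepFun X ε μ) (hX : Measurable X)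
    (hε : AEMeasurable ε μ) {S : Set β} (hS : MeasurableSet S) {k : β → ℝ} {φ : γ → ℝ}
    (hk : Measurable k) (hφ : Measurable φ) :
    ∫ ω, k (X ω) * φ (ε ω) ∂μ[|X ⁻¹' S] = (∫ ω, k (X ω) ∂μ[|X ⁻¹' S]) * ∫ ω, φ (ε ω) ∂μ := by
  have hXS : MeasurableSet (X ⁻¹' S) := hX hS
  have hprod : (X ⁻¹' S).indicator (fun ω => k (X ω) * φ (ε ω)) =
      fun ω => S.indicator k (X ω) * φ (ε ω) := by
    ext ω
    by_cases hω : X ω ∈ S <;> simp [Set.indicator, hω]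
  have hfac := (hindep.comp (hk.indicator hS) hφ).integral_fun_mul_eq_mul_integral
    ((hk.indicator hS).comp hX).aestronglyMeasurable
    (hφ.comp_aemeasurable hε).aestronglyMeasurable
  rw [ProbabilityTheory.cond, integral_smul_measure, integral_smul_measure,
    ← integral_indicator hXS, ← integral_indicator hXS, hprod, smul_mul_assoc]
  exact congrArg _ hfac

lemma integral_sq_add_of_integral_mul_eq_zero {ν : Measure Ω} {h e : Ω → ℝ} (hh : MemLp h 2 ν)
    (he : MemLp e 2 ν) (h0 : ∫ ω, h ω * e ω ∂ν = 0) :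
    ∫ ω, (h ω + e ω) ^ 2 ∂ν = ∫ ω, h ω ^ 2 ∂ν + ∫ ω, e ω ^ 2 ∂ν := by
  have hh2 := hh.integrable_sq
  have he2 := he.integrable_sq
  have hhe : Integrable (fun ω => h ω * e ω) ν := hh.integrable_mul he
  calc ∫ ω, (h ω + e ω) ^ 2 ∂ν = ∫ ω, (h ω ^ 2 + e ω ^ 2 + 2 * (h ω * e ω)) ∂ν := by
        congr 1; ext ω; ring
    _ = _ := by
        rw [integral_add (by fun_prop) (by fun_prop), integral_add hh2 he2, integral_const_mul,
          h0, mul_zero, add_zero]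

lemma ProbabilityTheory.IndepFun.integral_cond_sq_add [IsFiniteMeasure μ] {β : Type*}
    [MeasurableSpace β] {X : Ω → β} {ε : Ω → ℝ} (hindep : IndepFun X ε μ) (hX : Measurable X)
    (hε : MemLp ε 2 μ) (hε0 : ∫ ω, ε ω ∂μ = 0) {S : Set β} (hS : MeasurableSet S)
    (hS0 : μ (X ⁻¹' S) ≠ 0) {k : β → ℝ} (hk : Measurable k)
    (hkX : MemLp (fun ω => k (X ω)) 2 μ) :
    ∫ ω, (k (X ω) + ε ω) ^ 2 ∂μ[|X ⁻¹' S] = ∫ ω, k (X ω) ^ 2 ∂μ[|X ⁻¹' S] + ∫ ω, ε ω ^ 2 ∂μ := by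
  have := cond_isProbabilityMeasure (μ := μ) hS0
  have hεm := hε.aestronglyMeasurable.aemeasurable
  have hcross := hindep.integral_cond_comp_mul hX hεm hS hk measurable_id
  have hsq := hindep.integral_cond_comp_mul hX hεm hS (k := fun _ => 1) measurable_const
    (measurable_id.pow_const 2)
  simp only [id, one_mul, integral_const, probReal_univ, one_smul] at hcross hsq
  rw [integral_sq_add_of_integral_mul_eq_zero (hkX.cond hS0) (hε.cond hS0)
    (by rw [hcross, hε0, mul_zero]), hsq]

lemma condMean_sq_sub_affine_eq [IsFiniteMeasure μ] {X ε Y : Ω → ℝ} {r : ℝ → ℝ}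
    (hindep : IndepFun X ε μ) (hX : Measurable X) (hr : Measurable r) (hε : MemLp ε 2 μ)
    (hε0 : ∫ ω, ε ω ∂μ = 0) (hrX : MemLp (fun ω => r (X ω)) 2 μ) (hXm : MemLp X 2 μ)
    (hY : ∀ ω, Y ω = r (X ω) + ε ω) {u : ℝ} (hu : μ {ω | u ≤ X ω} ≠ 0) (α β : ℝ) :
    condMean μ X u (fun ω => (Y ω - α - β * X ω) ^ 2) =
      ∫ ω, (r (X ω) - α - β * X ω) ^ 2 ∂μ[|{ω | u ≤ X ω}] + ∫ ω, ε ω ^ 2 ∂μ := by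
  rw [condMean_eq_integral_cond]
  refine Eq.trans ?_ (hindep.integral_cond_sq_add hX hε hε0 measurableSet_Ici hu
    (k := fun x => r x - α - β * x) (by fun_prop) ((hrX.sub (memLp_const α)).sub (hXm.const_mul β)))
  refine integral_congr_ae (ae_of_all _ fun ω => ?_)
  simp only [hY]
  ring

end Independence

section AffineTails

variable {Ω : Type*} [MeasurableSpace Ω] {μ : Measure Ω}

lemma exists_forall_affine_eq_imp_eq {α β α' β' : ℝ} (h : ¬(α = α' ∧ β = β')) :
    ∃ c : ℝ, ∀ x : ℝ, α + β * x = α' + β' * x → x = c := by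
  by_cases hβ : β = β'
  · exact ⟨0, fun x hx => absurd ⟨by subst hβ; linarith, hβ⟩ h⟩
  · refine ⟨(α' - α) / (β - β'), fun x hx => ?_⟩
    rw [eq_div_iff (sub_ne_zero.2 hβ)]
    linarith

lemma affine_coeffs_eq_of_ae {X f : Ω → ℝ} (hcdf : ∀ x : ℝ, μ {ω | X ω = x} = 0) {B : Set Ω}
    (hB : μ B ≠ 0) {α β α' β' : ℝ} (h : ∀ᵐ ω ∂μ, ω ∈ B → f ω = α + β * X ω)
    (h' : ∀ᵐ ω ∂μ, ω ∈ B → f ω = α' + β' * X ω) : α = α' ∧ β = β' := by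
  by_contra hne
  obtain ⟨c, hc⟩ := exists_forall_affine_eq_imp_eq hne
  refine hB (measure_mono_null_ae ?_ (hcdf c))
  filter_upwards [h, h'] with ω h h' hω
  exact hc _ ((h hω).symm.trans (h' hω))

lemma bddBelow_of_ae_affine_on_tails {X f : Ω → ℝ} (hcdf : ∀ x : ℝ, μ {ω | X ω = x} = 0)
    (hnot : ∀ α β : ℝ, ¬ ∀ᵐ ω ∂μ, f ω = α + β * X ω) {U : Set ℝ}
    (hU : ∀ u ∈ U, μ {ω | u < X ω} ≠ 0 ∧
      ∃ α β : ℝ, ∀ᵐ ω ∂μ, u < X ω → f ω = α + β * X ω) :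
    BddBelow U := by
  by_contra hbdd
  rw [not_bddBelow_iff] at hbdd
  obtain ⟨a, haU, -⟩ := hbdd 0
  obtain ⟨ha0, α, β, ha⟩ := hU a haU
  have htail : ∀ n : ℕ, ∀ᵐ ω ∂μ, -(n : ℝ) < X ω → f ω = α + β * X ω := by
    intro n
    obtain ⟨v, hvU, hv⟩ := hbdd (min a (-n))
    obtain ⟨-, α', β', hv'⟩ := hU v hvU
    have hva : ∀ᵐ ω ∂μ, a < X ω → f ω = α' + β' * X ω := by
      filter_upwards [hv'] with ω h hω
      exact h ((hv.trans_le (min_le_left _ _)).trans hω)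
    obtain ⟨rfl, rfl⟩ := affine_coeffs_eq_of_ae hcdf ha0 ha hva
    filter_upwards [hv'] with ω h hω
    exact h ((hv.trans_le (min_le_right _ _)).trans hω)
  refine hnot α β ?_
  filter_upwards [ae_all_iff.2 htail] with ω h
  obtain ⟨n, hn⟩ := exists_nat_gt (-X ω)
  exact h n (by linarith)

lemma bddBelow_cond_affine_thresholds [IsProbabilityMeasure μ] {X f : Ω → ℝ} (hX : Measurable X)
    (hf : Measurable f) (hcdf : ∀ x : ℝ, μ {ω | X ω = x} = 0)
    (hnotlin : ∀ α β : ℝ, μ {ω | f ω = α + β * X ω} < 1) :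
    BddBelow {u : ℝ | 0 < μ {ω | u < X ω} ∧
      ∃ α β : ℝ, μ[|{ω | u < X ω}] {ω | f ω = α + β * X ω} = 1} := by
  have hT : ∀ α β : ℝ, MeasurableSet {ω | f ω = α + β * X ω} := fun α β =>
    measurableSet_eq_fun hf (by fun_prop)
  refine bddBelow_of_ae_affine_on_tails (f := f) hcdf (fun α β h => (hnotlin α β).ne ?_) ?_
  · exact (ae_mem_iff_measure_eq (hT α β).nullMeasurableSet).1 h |>.trans measure_univ
  · rintro v ⟨hv0, α, β, h⟩
    exact ⟨hv0.ne', α, β, (cond_eq_one_iff_ae (hX measurableSet_Ioi) (hT α β) hv0.ne').1 h⟩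

end AffineTails

theorem stmt5_general {Ω : Type*} [MeasurableSpace Ω] (μ : Measure Ω) [IsProbabilityMeasure μ]
    (X ε : Ω → ℝ) (r : ℝ → ℝ) (σ : ℝ)
    (hX : Measurable X) (hε : Measurable ε) (hr : Measurable r)
    (hindep : IndepFun X ε μ)
    (hmean : ∫ ω, ε ω ∂μ = 0)
    (hε2 : Integrable (fun ω => (ε ω) ^ 2) μ) (hσ : ∫ ω, (ε ω) ^ 2 ∂μ = σ ^ 2)
    (hX2 : Integrable (fun ω => (X ω) ^ 2) μ)
    (hr2 : Integrable (fun ω => (r (X ω)) ^ 2) μ)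
    (hcdf : ∀ x : ℝ, μ {ω | X ω = x} = 0)
    (Y : Ω → ℝ) (hY : ∀ ω, Y ω = r (X ω) + ε ω)
    -- the set of admissible thresholds and its infimum u₀
    (U : Set ℝ)
    (hU : U = {u : ℝ | 0 < μ {ω | u < X ω} ∧
        ∃ α β : ℝ, μ[|{ω | u < X ω}] {ω | r (X ω) = α + β * X ω} = 1})
    (u₀ : ℝ) (hu₀ : u₀ = sInf U)
    -- r is not almost surely linear on the whole support
    (hnotlin : ∀ α β : ℝ, μ {ω | r (X ω) = α + β * X ω} < 1) :
    ∀ u : ℝ, u < u₀ → 0 < μ {ω | u ≤ X ω} →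
      0 < condMean μ X u (fun ω => (X ω) ^ 2) - (condMean μ X u X) ^ 2 →
      σ ^ 2 < linLoss μ X Y u := by
  intro u hu hApos hvar
  have hbdd : BddBelow U := hU ▸ bddBelow_cond_affine_thresholds hX (hr.comp hX) hcdf hnotlin
  have := cond_isProbabilityMeasure hApos.ne'
  have hnotaff : ∀ a b : ℝ, ¬ ∀ᵐ ω ∂μ[|{ω | u ≤ X ω}], r (X ω) = a + b * X ω := by
    intro a b h
    have hpos : 0 < μ {ω | u < X ω} := (measure_lt_eq_measure_le (hcdf u)).symm ▸ hApos
    have hT : MeasurableSet {ω | r (X ω) = a + b * X ω} :=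
      measurableSet_eq_fun (hr.comp hX) (by fun_prop)
    have huU : u ∈ U := hU ▸ ⟨hpos, a, b, cond_eq_one_of_ae_cond_of_subset
      (hX measurableSet_Ioi) (hX measurableSet_Ici) hT (fun ω (hω : u < X ω) => hω.le) hpos.ne' h⟩
    exact (hu₀ ▸ hu).not_ge (csInf_le hbdd huU)
  have hrX : MemLp (fun ω => r (X ω)) 2 μ :=
    (memLp_two_iff_integrable_sq (hr.comp hX).aestronglyMeasurable).2 hr2
  have hX' : MemLp X 2 μ := (memLp_two_iff_integrable_sq hX.aestronglyMeasurable).2 hX2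
  have hε' : MemLp ε 2 μ := (memLp_two_iff_integrable_sq hε.aestronglyMeasurable).2 hε2
  rw [condMean_eq_integral_cond, condMean_eq_integral_cond] at hvar
  obtain ⟨C, hC, hCle⟩ := exists_pos_le_integral_sq_sub_affine (hrX.cond hApos.ne')
    (hX'.cond hApos.ne') hvar hnotaff
  refine (lt_add_of_pos_left _ hC).trans_le (le_linLoss fun α β => ?_)
  rw [condMean_sq_sub_affine_eq hindep hX hr hε' hmean hrX hX' hY hApos.ne', hσ]
  linarith [hCle α β]

theorem stmt5 {Ω : Type*} [MeasurableSpace Ω] (μ : Measure Ω) [IsProbabilityMeasure μ]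
    (X ε : Ω → ℝ) (r : ℝ → ℝ) (σ : ℝ)
    (hX : Measurable X) (hε : Measurable ε) (hr : Measurable r)
    (hindep : IndepFun X ε μ)
    (hε1 : Integrable ε μ) (hmean : ∫ ω, ε ω ∂μ = 0)
    (hε2 : Integrable (fun ω => (ε ω) ^ 2) μ) (hσ : ∫ ω, (ε ω) ^ 2 ∂μ = σ ^ 2)
    (hX2 : Integrable (fun ω => (X ω) ^ 2) μ)
    (hr2 : Integrable (fun ω => (r (X ω)) ^ 2) μ)
    (hcdf : ∀ x : ℝ, μ {ω | X ω = x} = 0)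
    (Y : Ω → ℝ) (hY : ∀ ω, Y ω = r (X ω) + ε ω)
    -- the set of admissible thresholds and its infimum u₀
    (U : Set ℝ)
    (hU : U = {u : ℝ | 0 < μ {ω | u < X ω} ∧
        ∃ α β : ℝ, μ[|{ω | u < X ω}] {ω | r (X ω) = α + β * X ω} = 1})
    (hUne : U.Nonempty)
    (u₀ : ℝ) (hu₀ : u₀ = sInf U)
    -- r is not almost surely linear on the whole support
    (hnotlin : ∀ α β : ℝ, μ {ω | r (X ω) = α + β * X ω} < 1) :
    ∀ u : ℝ, u < u₀ → 0 < μ {ω | u ≤ X ω} →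
      0 < condMean μ X u (fun ω => (X ω) ^ 2) - (condMean μ X u X) ^ 2 →
      σ ^ 2 < linLoss μ X Y u :=
  stmt5_general μ X ε r σ hX hε hr hindep hmean hε2 hσ hX2 hr2 hcdf Y hY U hU u₀ hu₀ hnotlin
end

section
/- Let X be a real random variable with continuous cdf, E X² < ∞, Y square-integrable, E[X²Y²] < ∞, and ℓ(u) = E[(Y - α_u - β_u X)² | X ≥ u] where (α_u, β_u) are the best linear prediction coefficients given X ≥ u. Then ℓ is continuous on {u : P(X ≥ u) > 0 and Var(X | X ≥ u) > 0}. -/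
/-!
The conditional moments `u ↦ E[W ; X ≥ u]` are continuous for every integrable `W` because `X`
has no atoms: for almost every `ω` the indicator of `{u ≤ X ω}` is locally constant at `u`, so
dominated convergence applies. Dividing by `P(X ≥ u) > 0` keeps the conditional means continuous,
and where `Var(X | X ≥ u) > 0` so are the regression coefficients. Expanding the square writes
`ℓ(u)` as a polynomial in these conditional moments and coefficients.
-/

open MeasureTheory ProbabilityTheory Filter Topology

/-- Best linear slope given `X ≥ u`: `Cov(X,Y | X ≥ u)/Var(X | X ≥ u)`. -/
noncomputable def slopeCoef {Ω : Type*} [MeasurableSpace Ω] (μ : Measure Ω)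
    (X Y : Ω → ℝ) (u : ℝ) : ℝ :=
  (condMean μ X u (fun ω => X ω * Y ω) - condMean μ X u X * condMean μ X u Y) /
    (condMean μ X u (fun ω => (X ω) ^ 2) - (condMean μ X u X) ^ 2)

/-- Best linear intercept given `X ≥ u`. -/
noncomputable def interCoef {Ω : Type*} [MeasurableSpace Ω] (μ : Measure Ω)
    (X Y : Ω → ℝ) (u : ℝ) : ℝ :=
  condMean μ X u Y - slopeCoef μ X Y u * condMean μ X u X

/-- `ℓ(u) = E[(Y - α_u - β_u X)² | X ≥ u]` with the best linear coefficients. -/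
noncomputable def lossFun {Ω : Type*} [MeasurableSpace Ω] (μ : Measure Ω)
    (X Y : Ω → ℝ) (u : ℝ) : ℝ :=
  condMean μ X u (fun ω => (Y ω - interCoef μ X Y u - slopeCoef μ X Y u * X ω) ^ 2)

theorem integral_sq_sub_affine {Ω : Type*} [MeasurableSpace Ω] {ν : Measure Ω}
    [IsFiniteMeasure ν] {X Y : Ω → ℝ} (hX : MemLp X 2 ν) (hY : MemLp Y 2 ν) (a b : ℝ) :
    ∫ ω, (Y ω - a - b * X ω) ^ 2 ∂ν = ∫ ω, Y ω ^ 2 ∂ν - 2 * a * ∫ ω, Y ω ∂ν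
      - 2 * b * ∫ ω, X ω * Y ω ∂ν + a ^ 2 * ν.real Set.univ + 2 * a * b * ∫ ω, X ω ∂ν
      + b ^ 2 * ∫ ω, X ω ^ 2 ∂ν := by
  have hXint := hX.integrable one_le_two
  have hYint := hY.integrable one_le_two
  have hX2int := hX.integrable_sq
  have hY2int := hY.integrable_sq
  have hXYint : Integrable (fun ω => X ω * Y ω) ν := hX.integrable_mul hY
  have hexpand : ∀ ω, (Y ω - a - b * X ω) ^ 2 = Y ω ^ 2 - 2 * a * Y ω
      - 2 * b * (X ω * Y ω) + a ^ 2 + 2 * a * b * X ω + b ^ 2 * X ω ^ 2 := fun ω => by ring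
  simp_rw [hexpand]
  rw [integral_add, integral_add, integral_add, integral_sub, integral_sub]
  · simp only [integral_const_mul, integral_const, smul_eq_mul]
    ring
  all_goals fun_prop

section UpperTail

variable {Ω : Type*} [MeasurableSpace Ω] {μ : Measure Ω} {X : Ω → ℝ}

theorem continuous_setIntegral_setOf_le {E : Type*} [NormedAddCommGroup E] [NormedSpace ℝ E]
    (hX : Measurable X) (hatom : ∀ x, μ {ω | X ω = x} = 0) {W : Ω → E}
    (hW : Integrable W μ) :
    Continuous fun u => ∫ ω in {ω | u ≤ X ω}, W ω ∂μ := by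
  have hS : ∀ u : ℝ, MeasurableSet {ω | u ≤ X ω} := fun u => hX measurableSet_Ici
  simp_rw [← integral_indicator (hS _)]
  refine continuous_iff_continuousAt.2 fun u₀ => continuousAt_of_dominated
    (Eventually.of_forall fun u => hW.aestronglyMeasurable.indicator (hS u))
    (Eventually.of_forall fun u => Eventually.of_forall fun ω => norm_indicator_le_norm_self _ _)
    hW.norm ?_
  filter_upwards [measure_eq_zero_iff_ae_notMem.1 (hatom u₀)] with ω hω
  refine EventuallyEq.continuousAt (y := {ω' | u₀ ≤ X ω'}.indicator W ω) ?_
  rcases lt_or_gt_of_ne (hω : X ω ≠ u₀) with hlt | hgt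
  · filter_upwards [eventually_gt_nhds hlt] with u hu
    simp [Set.indicator, hu.not_ge, hlt.not_ge]
  · filter_upwards [eventually_lt_nhds hgt] with u hu
    simp [Set.indicator, hu.le, hgt.le]

variable [IsFiniteMeasure μ]

theorem continuous_measureReal_setOf_le (hX : Measurable X) (hatom : ∀ x, μ {ω | X ω = x} = 0) :
    Continuous fun u => μ.real {ω | u ≤ X ω} := by
  simpa using continuous_setIntegral_setOf_le hX hatom (integrable_const (1 : ℝ))

theorem continuousAt_condMean (hX : Measurable X) (hatom : ∀ x, μ {ω | X ω = x} = 0)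
    {W : Ω → ℝ} (hW : Integrable W μ) {u : ℝ} (hu : 0 < μ {ω | u ≤ X ω}) :
    ContinuousAt (fun u => condMean μ X u W) u :=
  (continuous_setIntegral_setOf_le hX hatom hW).continuousAt.div
    (continuous_measureReal_setOf_le hX hatom).continuousAt
    (ENNReal.toReal_pos hu.ne' (measure_ne_top μ _)).ne'

theorem condMean_sq_sub_affine {Y : Ω → ℝ} (hX2 : MemLp X 2 μ) (hY2 : MemLp Y 2 μ) {u : ℝ}
    (hu : 0 < μ {ω | u ≤ X ω}) (a b : ℝ) :
    condMean μ X u (fun ω => (Y ω - a - b * X ω) ^ 2)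
      = condMean μ X u (fun ω => Y ω ^ 2) - 2 * a * condMean μ X u Y
        - 2 * b * condMean μ X u (fun ω => X ω * Y ω) + a ^ 2
        + 2 * a * b * condMean μ X u X + b ^ 2 * condMean μ X u (fun ω => X ω ^ 2) := by
  have hpos : (μ {ω | u ≤ X ω}).toReal ≠ 0 := (ENNReal.toReal_pos hu.ne' (measure_ne_top μ _)).ne'
  simp only [condMean]
  rw [integral_sq_sub_affine (hX2.restrict _) (hY2.restrict _), measureReal_restrict_apply_univ,
    measureReal_def]
  field_simp

variable {Y : Ω → ℝ} (hX : Measurable X) (hatom : ∀ x, μ {ω | X ω = x} = 0)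
  (hX2 : MemLp X 2 μ) (hY2 : MemLp Y 2 μ)
include hX hatom hX2 hY2

theorem continuousAt_slopeCoef {u : ℝ} (hu : 0 < μ {ω | u ≤ X ω})
    (hvar : 0 < condMean μ X u (fun ω => X ω ^ 2) - condMean μ X u X ^ 2) :
    ContinuousAt (fun u => slopeCoef μ X Y u) u := by
  have hm : ∀ {W : Ω → ℝ}, Integrable W μ → ContinuousAt (fun u => condMean μ X u W) u :=
    fun hW => continuousAt_condMean hX hatom hW hu
  have hXint := hm (hX2.integrable one_le_two)
  exact ((hm (hX2.integrable_mul hY2)).sub (hXint.mul (hm (hY2.integrable one_le_two)))).div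
    ((hm hX2.integrable_sq).sub (hXint.pow 2)) hvar.ne'

theorem continuousAt_interCoef {u : ℝ} (hu : 0 < μ {ω | u ≤ X ω})
    (hvar : 0 < condMean μ X u (fun ω => X ω ^ 2) - condMean μ X u X ^ 2) :
    ContinuousAt (fun u => interCoef μ X Y u) u :=
  (continuousAt_condMean hX hatom (hY2.integrable one_le_two) hu).sub
    ((continuousAt_slopeCoef hX hatom hX2 hY2 hu hvar).mul
      (continuousAt_condMean hX hatom (hX2.integrable one_le_two) hu))

end UpperTail

theorem stmt7_general {Ω : Type*} [MeasurableSpace Ω] (μ : Measure Ω) [IsProbabilityMeasure μ]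
    (X Y : Ω → ℝ) (hX : Measurable X) (hY : Measurable Y)
    (hcdf : ∀ x : ℝ, μ {ω | X ω = x} = 0)
    (hX2 : Integrable (fun ω => (X ω) ^ 2) μ)
    (hY2 : Integrable (fun ω => (Y ω) ^ 2) μ) :
    ContinuousOn (fun u => lossFun μ X Y u)
      {u : ℝ | 0 < μ {ω | u ≤ X ω} ∧
        0 < condMean μ X u (fun ω => (X ω) ^ 2) - (condMean μ X u X) ^ 2} := by
  have hXL2 : MemLp X 2 μ := (memLp_two_iff_integrable_sq hX.aestronglyMeasurable).2 hX2
  have hYL2 : MemLp Y 2 μ := (memLp_two_iff_integrable_sq hY.aestronglyMeasurable).2 hY2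
  refine ContinuousOn.congr (fun u ⟨hu, hvar⟩ => ContinuousAt.continuousWithinAt ?_)
    fun u hu => condMean_sq_sub_affine hXL2 hYL2 hu.1 _ _
  have hm : ∀ {W : Ω → ℝ}, Integrable W μ → ContinuousAt (fun u => condMean μ X u W) u :=
    fun hW => continuousAt_condMean hX hcdf hW hu
  have hα := continuousAt_interCoef hX hcdf hXL2 hYL2 hu hvar
  have hβ := continuousAt_slopeCoef hX hcdf hXL2 hYL2 hu hvar
  have hmX2 := hm hX2
  have hmY2 := hm hY2
  have hmX := hm (hXL2.integrable one_le_two)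
  have hmY := hm (hYL2.integrable one_le_two)
  have hmXY := hm (hXL2.integrable_mul hYL2)
  fun_prop

theorem stmt7 {Ω : Type*} [MeasurableSpace Ω] (μ : Measure Ω) [IsProbabilityMeasure μ]
    (X Y : Ω → ℝ) (hX : Measurable X) (hY : Measurable Y)
    (hcdf : ∀ x : ℝ, μ {ω | X ω = x} = 0)
    (hX2 : Integrable (fun ω => (X ω) ^ 2) μ)
    (hY2 : Integrable (fun ω => (Y ω) ^ 2) μ)
    (hXY2 : Integrable (fun ω => (X ω) ^ 2 * (Y ω) ^ 2) μ) :
    ContinuousOn (fun u => lossFun μ X Y u)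
      {u : ℝ | 0 < μ {ω | u ≤ X ω} ∧
        0 < condMean μ X u (fun ω => (X ω) ^ 2) - (condMean μ X u X) ^ 2} :=
  stmt7_general μ X Y hX hY hcdf hX2 hY2
end

section
/- Under the hypotheses of the penalized consistency proposition, for any δ ∈ (0, min(δ₁, δ₂)) there exists ν > 0 such that the event {W_n ≤ ν} is contained (for all sufficiently large n) in the event {PL_n(u₀) < PL_n(u) for all u < u₀ - δ}, where W_n = sup_{u ≤ u₀} |ℓ̂_n(u) - ℓ(u)| and PL_n(u) = ℓ̂_n(u) + λ_n f(u). -/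
open Filter

theorem stmt11 {Ω : Type*} (ℓ f : ℝ → ℝ) (u₀ δ δ₁ δ₂ νδ : ℝ) (lam : ℕ → ℝ)
    (ℓhat : ℕ → Ω → ℝ → ℝ)
    (hδ : 0 < δ) (hδ12 : δ < min δ₁ δ₂)
    -- inf_{u ≤ u₀ - δ} ℓ(u) - ℓ(u₀) = ν_δ > 0
    (hν : 0 < νδ) (hgap : ∀ u ≤ u₀ - δ, ℓ u₀ + νδ ≤ ℓ u)
    (hf0 : ∀ u, 0 ≤ f u) (hfmono : Monotone f)
    (hlam0 : ∀ n, 0 ≤ lam n) (hlam : Tendsto lam atTop (nhds 0)) :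
    ∃ ν : ℝ, 0 < ν ∧ ∀ᶠ n in atTop, ∀ ω : Ω,
      (∀ u ≤ u₀, |ℓhat n ω u - ℓ u| ≤ ν) →
      ∀ u < u₀ - δ,
        ℓhat n ω u₀ + lam n * f u₀ < ℓhat n ω u + lam n * f u := by
  refine ⟨νδ / 4, by linarith, ?_⟩
  have hsmall : ∀ᶠ n in atTop, lam n * f u₀ < νδ / 2 := by
    rcases le_or_gt (f u₀) 0 with h | h
    · filter_upwards [] with n
      have := mul_nonpos_of_nonneg_of_nonpos (hlam0 n) h
      linarith
    · have : ∀ᶠ n in atTop, |lam n - 0| < νδ / 2 / f u₀ := by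
        have := (Metric.tendsto_atTop.mp hlam) (νδ / 2 / f u₀) (by positivity)
        rcases this with ⟨N, hN⟩
        exact eventually_atTop.mpr ⟨N, fun n hn => hN n hn⟩
      filter_upwards [this] with n hn
      have h1 : lam n < νδ / 2 / f u₀ := by
        have := abs_lt.mp (by simpa using hn)
        linarith [this.2]
      calc lam n * f u₀ < (νδ / 2 / f u₀) * f u₀ := by
            exact mul_lt_mul_of_pos_right h1 h
        _ = νδ / 2 := by field_simp
  filter_upwards [hsmall] with n hn ω hW u hu
  have hu' : u ≤ u₀ := by linarith
  have h1 := hW u hu'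
  have h2 := hW u₀ le_rfl
  have h3 := hgap u (le_of_lt hu)
  have h4 : 0 ≤ lam n * f u := mul_nonneg (hlam0 n) (hf0 u)
  have := abs_le.mp h1
  have := abs_le.mp h2
  linarith [this.1, this.2, (abs_le.mp h1).1]
end

section
/- Under the hypotheses of the penalized consistency proposition, for any δ ∈ (0, min(δ₁, δ₂)), for n large enough, the event A_n ∩ {T_n ≤ a_n} is contained in the event {PL_n(u₀) < PL_n(u) for all u with u₀ + δ < u < γ̃}, where T_n = sup_{u ∈ [u₀, γ̃]} |ℓ̂_n(u) - ℓ(u)|, A_n = {u₀ + δ₁ < γ_n < γ̃}, and PL_n(u) = ℓ̂_n(u) + λ_n f(u). -/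
open Filter

theorem stmt12 {Ω : Type*} (ℓ f : ℝ → ℝ) (u₀ δ δ₁ δ₂ γt : ℝ) (lam an : ℕ → ℝ)
    (ℓhat : ℕ → Ω → ℝ → ℝ) (γn : ℕ → Ω → ℝ)
    (hδ : 0 < δ) (hδ12 : δ < min δ₁ δ₂)
    (hγt : u₀ + δ₁ < γt)
    -- ℓ is constant on [u₀, γ̃]
    (hconst : ∀ u ∈ Set.Icc u₀ γt, ℓ u = ℓ u₀)
    -- penalty function
    (hf0 : ∀ u, 0 ≤ f u) (hfmono : Monotone f)
    (hδ₂ : 0 < δ₂) (hstrict : StrictMonoOn f (Set.Ioo (u₀ - δ₂) (u₀ + δ₂)))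
    -- penalty parameters
    (hlampos : ∀ n, 0 < lam n)
    (hratio : Tendsto (fun n => an n / lam n) atTop (nhds 0)) :
    ∀ᶠ n in atTop, ∀ ω : Ω,
      (u₀ + δ₁ < γn n ω ∧ γn n ω < γt) →
      (∀ u ∈ Set.Icc u₀ γt, |ℓhat n ω u - ℓ u| ≤ an n) →
      ∀ u : ℝ, u₀ + δ < u → u < γt →
        ℓhat n ω u₀ + lam n * f u₀ < ℓhat n ω u + lam n * f u := by
  have hδδ₂ : δ < δ₂ := lt_of_lt_of_le hδ12 (min_le_right _ _)
  have hδδ₁ : δ < δ₁ := lt_of_lt_of_le hδ12 (min_le_left _ _)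
  have hc : 0 < f (u₀ + δ) - f u₀ := by
    have := hstrict (a := u₀) (b := u₀ + δ)
      ⟨by linarith, by linarith⟩ ⟨by linarith, by linarith⟩ (by linarith)
    linarith
  set c := f (u₀ + δ) - f u₀ with hcdef
  have hev : ∀ᶠ n in atTop, an n / lam n < c / 2 :=
    hratio.eventually_lt_const (by linarith)
  filter_upwards [hev] with n hn ω _ hT u hu1 hu2
  have hlam := hlampos n
  have han : an n < c / 2 * lam n := (div_lt_iff₀ hlam).mp hn
  have humem : u ∈ Set.Icc u₀ γt := ⟨by linarith, le_of_lt hu2⟩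
  have hu0mem : u₀ ∈ Set.Icc u₀ γt := ⟨le_refl _, by linarith⟩
  have h1 := abs_le.mp (hT u humem)
  have h2 := abs_le.mp (hT u₀ hu0mem)
  have hℓu : ℓ u = ℓ u₀ := hconst u humem
  have hfu : f (u₀ + δ) ≤ f u := hfmono (le_of_lt hu1)
  have : lam n * c ≤ lam n * (f u - f u₀) := by
    apply mul_le_mul_of_nonneg_left (by simp [hcdef]; linarith) (le_of_lt hlam)
  nlinarith [h1.1, h1.2, h2.1, h2.2]
end
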